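/- Let f be a Laurent polynomial in two variables whose Newton polygon is a Fano polygon, and let φ = φ_{v,F} be an algebraic mutation with respect to which f is mutable, i.e. g = φ*f is again a Laurent polynomial. Then the Fano polygon Newt(f) is mutable with respect to the pair (v, Newt(F)), and Newt(g) = mut_{v, Newt(F)}(Newt(f)). -/

import Mathlib

noncomputable section
open Pointwise

abbrev M : Type := ℤ × ℤ
abbrev NN : Type := ℤ × ℤ

def toR (m : M) : ℝ × ℝ := ((m.1 : ℝ), (m.2 : ℝ))
def pairZ (u : NN) (m : M) : ℤ := u.1 * m.1 + u.2 * m.2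
def pairR (u : NN) (x : ℝ × ℝ) : ℝ := u.1 * x.1 + u.2 * x.2
def IsPrimitive (u : ℤ × ℤ) : Prop := Int.gcd u.1 u.2 = 1

/-- A full-dimensional convex lattice polygon in `ℝ²`. -/
def IsLatticePolygon (P : Set (ℝ × ℝ)) : Prop :=
  (∃ S : Finset M, P = convexHull ℝ (toR '' (S : Set M))) ∧ (interior P).Nonempty

/-- A Fano polygon: the origin is in the strict interior and all vertices are primitive. -/
def IsFanoPolygon (P : Set (ℝ × ℝ)) : Prop :=
  IsLatticePolygon P ∧ (0 : ℝ × ℝ) ∈ interior P ∧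
  ∀ x ∈ Set.extremePoints ℝ P, ∃ m : M, toR m = x ∧ IsPrimitive m

/-- The face of `P` cut out by the inward normal `u` at height `h`. -/
def edgeSet (P : Set (ℝ × ℝ)) (u : NN) (h : ℤ) : Set (ℝ × ℝ) :=
  {x ∈ P | pairR u x = -(h : ℝ)}

/-- `(u,h)` is the data of an edge of `P`: `u` a primitive inward normal, `h = h_E` the
lattice height, and the corresponding face is one-dimensional (not a single point). -/
def IsEdge (P : Set (ℝ × ℝ)) (u : NN) (h : ℤ) : Prop :=
  IsPrimitive u ∧ 0 < h ∧ (∀ x ∈ P, -(h : ℝ) ≤ pairR u x) ∧ ¬ (edgeSet P u h).Subsingleton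

def latticePts (E : Set (ℝ × ℝ)) : Set M := {m : M | toR m ∈ E}

/-- Lattice length of the edge of `P` with data `(u,h)`: number of lattice points minus one. -/
def latLen (P : Set (ℝ × ℝ)) (u : NN) (h : ℤ) : ℕ := (latticePts (edgeSet P u h)).ncard - 1

/-- A T-polygon: a Fano polygon such that `h_E ∣ ℓ_E` for every edge `E`. -/
def IsTPolygon (P : Set (ℝ × ℝ)) : Prop :=
  IsFanoPolygon P ∧ ∀ u h, IsEdge P u h → h.toNat ∣ latLen P u h

/-- The slice of `P` at height `h` with respect to `v`. -/
def sliceAt (P : Set (ℝ × ℝ)) (v : NN) (h : ℤ) : Set (ℝ × ℝ) := {x ∈ P | pairR v x = (h : ℝ)}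

def IsPolytope (Q : Set (ℝ × ℝ)) : Prop :=
  ∃ S : Finset (ℝ × ℝ), Q = convexHull ℝ (S : Set (ℝ × ℝ))

/-- Mutation data: `v` primitive in the dual lattice, `F` a lattice segment or point in `v^⊥`. -/
def IsMutationData (v : NN) (F : Set (ℝ × ℝ)) : Prop :=
  IsPrimitive v ∧ ∃ a b : M, pairZ v a = 0 ∧ pairZ v b = 0 ∧ F = segment ℝ (toR a) (toR b)

/-- `P` is mutable with respect to `(v,F)` (via the witnesses `G h`), and
`P' = mut_{v,F}(P)` is the corresponding mutation. -/
def IsMutationOf (v : NN) (F : Set (ℝ × ℝ)) (P P' : Set (ℝ × ℝ)) : Prop :=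
  IsMutationData v F ∧
  ∃ G : ℤ → Set (ℝ × ℝ),
    (∀ h : ℤ, h < 0 → IsPolytope (G h) ∧ sliceAt P v h = G h + ((-h : ℤ) : ℝ) • F) ∧
    P' = convexHull ℝ ((⋃ h : ℤ, ⋃ _ : h < 0, G h) ∪
      (⋃ h : ℤ, ⋃ _ : 0 ≤ h, (sliceAt P v h + (h : ℝ) • F)))

def IsPolyMutation (P P' : Set (ℝ × ℝ)) : Prop := ∃ v F, IsMutationOf v F P P'

def unimodMap (a b c d : ℤ) (x : ℝ × ℝ) : ℝ × ℝ :=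
  ((a : ℝ) * x.1 + (b : ℝ) * x.2, (c : ℝ) * x.1 + (d : ℝ) * x.2)

/-- `P'` is the image of `P` under a transformation in `GL₂(ℤ)`. -/
def IsUnimodularImage (P P' : Set (ℝ × ℝ)) : Prop :=
  ∃ a b c d : ℤ, (a * d - b * c = 1 ∨ a * d - b * c = -1) ∧ P' = unimodMap a b c d '' P

/-- Laurent polynomials in two variables. -/
abbrev LP := AddMonoidAlgebra ℂ M

instance : IsDomain LP := NoZeroDivisors.to_isDomain _

/-- The field of fractions `ℂ(x,y)`. -/
abbrev K := FractionRing LP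

def ι : LP →+* K := algebraMap LP K

/-- The monomial `x^m`. -/
def mono (m : M) : LP := AddMonoidAlgebra.single m 1

/-- The coefficient of the constant monomial. -/
def constTerm (f : LP) : ℂ := f.coeff 0

/-- The Newton polygon of a Laurent polynomial. -/
def Newt (f : LP) : Set (ℝ × ℝ) := convexHull ℝ (toR '' (f.coeff.support : Set M))

/-- `φ` is the algebraic mutation `φ_{v,F}` of the field of fractions: the (ℂ-linear) field
automorphism determined by `x^m ↦ x^m F^{⟨m,v⟩}`, where `v` is primitive and all monomials
of the factor `F` lie in `v^⊥`. -/
def IsAlgMutation (v : NN) (F : LP) (φ : K ≃+* K) : Prop :=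
  IsPrimitive v ∧ F ≠ 0 ∧ (∀ m ∈ F.coeff.support, pairZ v m = 0) ∧
  (∀ c : ℂ, φ (ι (AddMonoidAlgebra.single 0 c)) = ι (AddMonoidAlgebra.single 0 c)) ∧
  (∀ m : M, φ (ι (mono m)) = ι (mono m) * (ι F) ^ (pairZ v m))

/-- One mutation step between Laurent polynomials: `g = φ*f` is again a Laurent polynomial. -/
def MutStep (f g : LP) : Prop :=
  ∃ (v : NN) (F : LP) (φ : K ≃+* K), IsAlgMutation v F φ ∧ φ (ι f) = ι g

/-- Mutation equivalence: a finite chain of algebraic mutations all of whose intermediate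
pullbacks are Laurent polynomials. -/
def MutEquiv : LP → LP → Prop := Relation.ReflTransGen MutStep

/-!
Write `f_h`, `g_h` for the parts of height `h` (with respect to `⟨·, v⟩`) of `f` and `g`.
Since `φ` multiplies a monomial of height `h` by `F ^ h`, comparing the height-`h` parts of
`g F^N = φ(f) F^N` (for `N` large) gives `g_h = f_h F^h` for `h ≥ 0` and `f_h = g_h F^(-h)` for
`h ≤ 0`. Newton polygons are additive under products (a vertex of a Minkowski sum of finite sets
is a sum in only one way), so `Newt g_h = Newt f_h + h Newt F`, resp.
`Newt f_h = Newt g_h + (-h) Newt F`. Thus every monomial of `f` lies in the set of points `x` with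
`x + ⟨x, v⟩ Newt F ⊆ Newt g` if `⟨x, v⟩ ≥ 0`, and `x ∈ (Newt g)_⟨x,v⟩ + (-⟨x, v⟩) Newt F` if
`⟨x, v⟩ ≤ 0`. Both halves are convex and they agree on `v^⊥`, so their union is convex and
contains all of `Newt f`. The same holds with `(v, f, g)` replaced by `(-v, g, f)`, and the two
inclusions are the slice identities defining `mut_{v, Newt F}(Newt f) = Newt g`.
-/

section Gluing

variable {E : Type*} [AddCommGroup E] [Module ℝ E] (ℓ : E →ₗ[ℝ] ℝ)

theorem mem_of_mem_segment_of_nonneg {U : Set E} (hU : Convex ℝ U) {a b x : E}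
    (ha : ℓ a ≤ 0) (hb : b ∈ U) (hcross : ∀ c ∈ segment ℝ a b, ℓ c = 0 → c ∈ U)
    (hx : x ∈ segment ℝ a b) (hℓx : 0 ≤ ℓ x) : x ∈ U := by
  rcases hℓx.eq_or_lt with hℓx | hℓx
  · exact hcross x hx hℓx.symm
  obtain ⟨α, β, hα, hβ, hαβ, rfl⟩ := hx
  simp only [map_add, map_smul, smul_eq_mul] at hℓx
  have hb0 : 0 < ℓ b := by nlinarith
  have hD : 0 < ℓ b - ℓ a := by linarith
  -- `c` is the point where the segment `[a, b]` crosses the hyperplane `ℓ = 0`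
  set c := (ℓ b / (ℓ b - ℓ a)) • a + (-ℓ a / (ℓ b - ℓ a)) • b with hc_def
  have hc : c ∈ U := hcross c
    ⟨_, _, div_nonneg hb0.le hD.le, div_nonneg (by linarith) hD.le, by field_simp; ring, rfl⟩
    (by simp only [hc_def, map_add, map_smul, smul_eq_mul]; field_simp; ring)
  have hx : α • a + β • b = (α * (ℓ b - ℓ a) / ℓ b) • c + ((α * ℓ a + β * ℓ b) / ℓ b) • b := by
    rw [hc_def]
    match_scalars
    · field_simp
    · field_simp; ring
  rw [hx]
  exact hU hc hb (by positivity) (by positivity) (by field_simp; linear_combination ℓ b * hαβ)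

theorem convex_union_of_crossing {U L : Set E} (hU : Convex ℝ U) (hL : Convex ℝ L)
    (hUℓ : ∀ x ∈ U, 0 ≤ ℓ x) (hLℓ : ∀ x ∈ L, ℓ x ≤ 0)
    (hcross : ∀ a ∈ L, ∀ b ∈ U, ∀ c ∈ segment ℝ a b, ℓ c = 0 → c ∈ U ∩ L) :
    Convex ℝ (U ∪ L) := by
  have key : ∀ a ∈ L, ∀ b ∈ U, segment ℝ a b ⊆ U ∪ L := by
    intro a ha b hb x hx
    by_cases hℓx : 0 ≤ ℓ x
    · exact .inl <| mem_of_mem_segment_of_nonneg ℓ hU (hLℓ a ha) hb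
        (fun c hc hc0 => (hcross a ha b hb c hc hc0).1) hx hℓx
    · refine .inr <| mem_of_mem_segment_of_nonneg (-ℓ) hL (by simpa using hUℓ b hb) ha
        (fun c hc hc0 => (hcross a ha b hb c (segment_symm ℝ b a ▸ hc) (by simpa using hc0)).2)
        (segment_symm ℝ a b ▸ hx) (by simp; linarith)
  refine convex_iff_segment_subset.2 ?_
  rintro x (hx | hx) y (hy | hy)
  · exact (hU.segment_subset hx hy).trans Set.subset_union_left
  · exact segment_symm ℝ x y ▸ key y hy x hx
  · exact key x hx y hy
  · exact (hL.segment_subset hx hy).trans Set.subset_union_right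

end Gluing

section MutationRegions

variable {E : Type*} [AddCommGroup E] [Module ℝ E] (ℓ : E →ₗ[ℝ] ℝ) (F Q : Set E) {x : E}

-- For `Q = mut_{v,F}(P)` and `ℓ = ⟨·, v⟩`, the part of `P` with `ℓ ≥ 0` lies in `mutUpper ℓ F Q`
-- and the part with `ℓ ≤ 0` in `mutLower ℓ F Q`.
def mutUpper : Set E := {x | 0 ≤ ℓ x ∧ ∀ ψ ∈ F, x + ℓ x • ψ ∈ Q}

def mutLower : Set E := {x | ℓ x ≤ 0 ∧ x ∈ {y ∈ Q | ℓ y = ℓ x} + (-ℓ x) • F}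

variable {ℓ F Q}

theorem convex_mutUpper (hQ : Convex ℝ Q) : Convex ℝ (mutUpper ℓ F Q) := by
  rintro x ⟨hx0, hx⟩ y ⟨hy0, hy⟩ a b ha hb hab
  refine ⟨by simp only [map_add, map_smul, smul_eq_mul]; positivity, fun ψ hψ => ?_⟩
  convert hQ (hx ψ hψ) (hy ψ hψ) ha hb hab using 1
  simp only [map_add, map_smul, smul_eq_mul]
  module

theorem convex_mutLower (hQ : Convex ℝ Q) (hF : Convex ℝ F) : Convex ℝ (mutLower ℓ F Q) := by
  rintro x ⟨hx0, hx⟩ x' ⟨hx0', hx'⟩ a b ha hb hab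
  obtain ⟨y, ⟨hyQ, hyx⟩, z, hz, rfl⟩ := Set.mem_add.1 hx
  obtain ⟨y', ⟨hyQ', hyx'⟩, z', hz', rfl⟩ := Set.mem_add.1 hx'
  have hℓ : ℓ (a • (y + z) + b • (y' + z')) = a * ℓ (y + z) + b * ℓ (y' + z') := by
    simp only [map_add, map_smul, smul_eq_mul]
  refine ⟨by rw [hℓ]; nlinarith, Set.mem_add.2 ⟨a • y + b • y', ⟨hQ hyQ hyQ' ha hb hab, ?_⟩,
    a • z + b • z', ?_, by module⟩⟩
  · rw [hℓ, map_add, map_smul, map_smul, hyx, hyx', smul_eq_mul, smul_eq_mul]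
  · have hzz : a • z + b • z' ∈ (a * -ℓ (y + z)) • F + (b * -ℓ (y' + z')) • F := by
      rw [mul_smul, mul_smul]
      exact Set.add_mem_add (Set.smul_mem_smul_set hz) (Set.smul_mem_smul_set hz')
    rw [← hF.add_smul (mul_nonneg ha (by linarith)) (mul_nonneg hb (by linarith))] at hzz
    convert hzz using 2
    rw [hℓ]
    ring

theorem mem_mutUpper_of_mem (hxQ : x ∈ Q) (hx : ℓ x = 0) : x ∈ mutUpper ℓ F Q :=
  ⟨hx.ge, fun ψ _ => by simpa [hx] using hxQ⟩

theorem mem_mutLower_of_mem (hF : F.Nonempty) (hxQ : x ∈ Q) (hx : ℓ x = 0) :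
    x ∈ mutLower ℓ F Q :=
  ⟨hx.le, by simpa [hx, Set.zero_smul_set hF] using hxQ⟩

theorem mem_of_mem_mutUpper (hF : F.Nonempty) (hx : x ∈ mutUpper ℓ F Q) (hx0 : ℓ x = 0) :
    x ∈ Q := by
  obtain ⟨ψ, hψ⟩ := hF
  simpa [hx0] using hx.2 ψ hψ

theorem mem_of_mem_mutLower (hx : x ∈ mutLower ℓ F Q) (hx0 : ℓ x = 0) : x ∈ Q := by
  obtain ⟨y, ⟨hyQ, -⟩, z, hz, hyz⟩ := Set.mem_add.1 hx.2
  obtain ⟨ψ, -, rfl⟩ := Set.mem_smul_set.1 hz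
  rwa [← hyz, hx0, neg_zero, zero_smul, add_zero]

theorem mem_of_mem_segment_mutLower_mutUpper (hQ : Convex ℝ Q) {a b c : E}
    (ha : a ∈ mutLower ℓ F Q) (hb : b ∈ mutUpper ℓ F Q) (hc : c ∈ segment ℝ a b) (hc0 : ℓ c = 0) :
    c ∈ Q := by
  obtain ⟨y, ⟨hyQ, hya⟩, z, hz, hyz⟩ := Set.mem_add.1 ha.2
  obtain ⟨ψ, hψ, rfl⟩ := Set.mem_smul_set.1 hz
  obtain ⟨α, β, hα, hβ, hαβ, rfl⟩ := hc
  have hℓc : α * ℓ a + β * ℓ b = 0 := by simpa using hc0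
  have hc : α • a + β • b = α • y + β • (b + ℓ b • ψ) := by
    rw [← hyz]
    linear_combination (norm := module) -hℓc • ψ
  exact hc ▸ hQ hyQ (hb.2 ψ hψ) hα hβ hαβ

theorem convex_mutUpper_union_mutLower (hQ : Convex ℝ Q) (hF : Convex ℝ F) (hFne : F.Nonempty) :
    Convex ℝ (mutUpper ℓ F Q ∪ mutLower ℓ F Q) :=
  convex_union_of_crossing ℓ (convex_mutUpper hQ) (convex_mutLower hQ hF) (fun _ hx => hx.1)
    (fun _ hx => hx.1) fun _ ha _ hb _ hc hc0 =>
      have hcQ := mem_of_mem_segment_mutLower_mutUpper hQ ha hb hc hc0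
      ⟨mem_mutUpper_of_mem hcQ hc0, mem_mutLower_of_mem hFne hcQ hc0⟩

theorem mem_mutUpper_of_mem_union (hx : x ∈ mutUpper ℓ F Q ∪ mutLower ℓ F Q)
    (hx0 : 0 ≤ ℓ x) : x ∈ mutUpper ℓ F Q := by
  rcases hx with hx | hx
  · exact hx
  · have hx0 : ℓ x = 0 := le_antisymm hx.1 hx0
    exact mem_mutUpper_of_mem (mem_of_mem_mutLower hx hx0) hx0

theorem mem_mutLower_of_mem_union (hFne : F.Nonempty)
    (hx : x ∈ mutUpper ℓ F Q ∪ mutLower ℓ F Q) (hx0 : ℓ x ≤ 0) : x ∈ mutLower ℓ F Q := by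
  rcases hx with hx | hx
  · have hx0 : ℓ x = 0 := le_antisymm hx0 hx.1
    exact mem_mutLower_of_mem hFne (mem_of_mem_mutUpper hFne hx hx0) hx0
  · exact hx

end MutationRegions

theorem convexHull_eq_segment_of_param {E : Type*} [AddCommGroup E] [Module ℝ E] {K : Set E}
    {x₀ w a b : E} {τ : E → ℝ} (hK : ∀ x ∈ K, x = x₀ + τ x • w) (ha : a ∈ K) (hb : b ∈ K)
    (hτ : ∀ x ∈ K, τ a ≤ τ x ∧ τ x ≤ τ b) :
    convexHull ℝ K = segment ℝ a b := by
  refine (convexHull_min (fun x hx => ?_) (convex_segment a b)).antisymm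
    (segment_subset_convexHull ha hb)
  have hline : ∀ y ∈ K, y = AffineMap.lineMap x₀ (x₀ + w) (τ y) := fun y hy => by
    rw [AffineMap.lineMap_apply, vadd_eq_add, vsub_eq_sub, add_sub_cancel_left, add_comm, ← hK y hy]
  rw [hline x hx, hline a ha, hline b hb, ← image_segment]
  exact Set.mem_image_of_mem _ (segment_eq_Icc ((hτ x hx).1.trans (hτ x hx).2) ▸ hτ x hx)

theorem eq_add_smul_of_pairR_eq {v : NN} {A B : ℤ} (hAB : A * v.1 + B * v.2 = 1) {t : ℝ}
    {x : ℝ × ℝ} (hx : pairR v x = t) :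
    x = t • ((A : ℝ), (B : ℝ)) + ((A : ℝ) * x.2 - B * x.1) • ((-v.2 : ℝ), (v.1 : ℝ)) := by
  have hAB' : (A : ℝ) * v.1 + B * v.2 = 1 := by exact_mod_cast hAB
  unfold pairR at hx
  ext <;> simp only [Prod.fst_add, Prod.snd_add, Prod.smul_fst, Prod.smul_snd, smul_eq_mul]
  · linear_combination A * hx - x.1 * hAB'
  · linear_combination B * hx - x.2 * hAB'

def pairLin (v : NN) : (ℝ × ℝ) →ₗ[ℝ] ℝ where
  toFun := pairR v
  map_add' x y := by simp only [pairR, Prod.fst_add, Prod.snd_add]; ring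
  map_smul' c x := by
    simp only [pairR, Prod.smul_fst, Prod.smul_snd, smul_eq_mul, RingHom.id_apply]; ring

@[simp]
theorem pairLin_apply (v : NN) (x : ℝ × ℝ) : pairLin v x = pairR v x := rfl

theorem pairLin_neg (v : NN) : pairLin (-v) = -pairLin v := by
  ext <;> simp [pairR]

theorem continuous_pairR (v : NN) : Continuous (pairR v) := by
  unfold pairR
  fun_prop

theorem pairR_toR (v : NN) (m : M) : pairR v (toR m) = pairZ v m := by
  simp [pairR, pairZ, toR]

theorem convex_sliceAt {P : Set (ℝ × ℝ)} (hP : Convex ℝ P) (v : NN) (h : ℤ) :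
    Convex ℝ (sliceAt P v h) :=
  hP.inter (convex_hyperplane (pairLin v).isLinear _)

theorem isPolytope_sliceAt {P : Set (ℝ × ℝ)} (hP : IsCompact P) (hPc : Convex ℝ P) {v : NN}
    (hv : IsPrimitive v) (h : ℤ) : IsPolytope (sliceAt P v h) := by
  obtain ⟨A, B, hAB⟩ := Int.isCoprime_iff_gcd_eq_one.mpr hv
  have hK : IsCompact (sliceAt P v h) :=
    hP.inter_right (isClosed_eq (continuous_pairR v) continuous_const)
  rcases (sliceAt P v h).eq_empty_or_nonempty with he | hne
  · exact ⟨∅, by simp [he]⟩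
  have hτ : Continuous fun x : ℝ × ℝ => (A : ℝ) * x.2 - B * x.1 := by fun_prop
  obtain ⟨a, ha, hamin⟩ := hK.exists_isMinOn hne hτ.continuousOn
  obtain ⟨b, hb, hbmax⟩ := hK.exists_isMaxOn hne hτ.continuousOn
  refine ⟨{a, b}, ?_⟩
  rw [Finset.coe_pair, convexHull_pair, ← (convex_sliceAt hPc v h).convexHull_eq]
  exact convexHull_eq_segment_of_param (fun x hx => eq_add_smul_of_pairR_eq hAB hx.2) ha hb
    fun x hx => ⟨hamin hx, hbmax hx⟩

theorem eq_and_eq_of_add_mem_extremePoints {𝕜 E : Type*} [Field 𝕜] [LinearOrder 𝕜]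
    [IsStrictOrderedRing 𝕜] [AddCommGroup E] [Module 𝕜 E] {A B S : Set E} (hS : A + B ⊆ S)
    {a a' b b' : E} (ha' : a' ∈ A) (hb' : b' ∈ B) (ha : a ∈ A) (hb : b ∈ B)
    (hz : a + b ∈ S.extremePoints 𝕜) (h : a' + b' = a + b) : a' = a ∧ b' = b := by
  -- `a + b` is the midpoint of `a + b'` and `a' + b`
  have hmid : a + b ∈ openSegment 𝕜 (a + b') (a' + b) :=
    ⟨1 / 2, 1 / 2, by norm_num, by norm_num, by norm_num, by
      linear_combination (norm := module) (1 / 2 : 𝕜) • h⟩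
  obtain ⟨h₁, h₂⟩ := (mem_extremePoints.1 hz).2 _ (hS (Set.add_mem_add ha hb')) _
    (hS (Set.add_mem_add ha' hb)) hmid
  exact ⟨add_right_cancel h₂, add_left_cancel h₁⟩

theorem Set.Finite.convexHull_extremePoints_convexHull {E : Type*} [AddCommGroup E] [Module ℝ E]
    [TopologicalSpace E] [T2Space E] [IsTopologicalAddGroup E] [ContinuousSMul ℝ E]
    [LocallyConvexSpace ℝ E] {S : Set E} (hS : S.Finite) :
    convexHull ℝ ((convexHull ℝ S).extremePoints ℝ) = convexHull ℝ S := by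
  conv_rhs => rw [← closure_convexHull_extremePoints (hS.isCompact_convexHull ℝ)
    (convex_convexHull ℝ S)]
  exact ((hS.subset extremePoints_convexHull_subset).isClosed_convexHull ℝ).closure_eq.symm

theorem toR_add (a b : M) : toR (a + b) = toR a + toR b := by
  simp [toR]

theorem toR_injective : Function.Injective toR := fun a b h => by
  simp only [toR, Prod.mk.injEq, Int.cast_inj] at h
  exact Prod.ext h.1 h.2

theorem newt_mul (p q : LP) : Newt (p * q) = Newt p + Newt q := by
  classical
  set A := toR '' (p.coeff.support : Set M)
  set B := toR '' (q.coeff.support : Set M)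
  have hAB : toR '' ((p * q).coeff.support : Set M) ⊆ A + B := by
    rintro _ ⟨m, hm, rfl⟩
    obtain ⟨a, ha, b, hb, rfl⟩ :=
      Finset.mem_add.1 (AddMonoidAlgebra.support_coeff_mul_subset p q hm)
    exact ⟨toR a, Set.mem_image_of_mem _ ha, toR b, Set.mem_image_of_mem _ hb, (toR_add a b).symm⟩
  refine (convexHull_mono hAB).trans_eq (convexHull_add A B) |>.antisymm ?_
  -- every vertex of `Newt p + Newt q` is a sum of monomials in exactly one way,
  -- so it survives in `p * q`
  change convexHull ℝ A + convexHull ℝ B ⊆ _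
  rw [← convexHull_add,
    ← ((p.coeff.support.finite_toSet.image toR).add
      (q.coeff.support.finite_toSet.image toR)).convexHull_extremePoints_convexHull]
  refine convexHull_mono fun z hz => ?_
  obtain ⟨_, ⟨a, ha, rfl⟩, _, ⟨b, hb, rfl⟩, rfl⟩ := extremePoints_convexHull_subset hz
  have huniq : UniqueAdd p.coeff.support q.coeff.support a b := fun a' b' ha' hb' h => by
    have := eq_and_eq_of_add_mem_extremePoints (subset_convexHull ℝ (A + B))
      (Set.mem_image_of_mem toR ha') (Set.mem_image_of_mem toR hb')
      (Set.mem_image_of_mem toR ha) (Set.mem_image_of_mem toR hb) hz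
      (by rw [← toR_add, ← toR_add, h])
    exact ⟨toR_injective this.1, toR_injective this.2⟩
  refine ⟨a + b, ?_, toR_add a b⟩
  rw [Finset.mem_coe, Finsupp.mem_support_iff, AddMonoidAlgebra.coeff_mul_add_of_uniqueAdd huniq]
  exact mul_ne_zero (Finsupp.mem_support_iff.1 ha) (Finsupp.mem_support_iff.1 hb)

theorem convex_newt (p : LP) : Convex ℝ (Newt p) := convex_convexHull ℝ _

theorem isCompact_newt (p : LP) : IsCompact (Newt p) :=
  (p.coeff.support.finite_toSet.image toR).isCompact_convexHull ℝ

theorem newt_nonempty {p : LP} (hp : p ≠ 0) : (Newt p).Nonempty := by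
  obtain ⟨m, hm⟩ := Finsupp.support_nonempty_iff.2 (AddMonoidAlgebra.coeff_eq_zero.not.2 hp)
  exact ⟨toR m, subset_convexHull ℝ _ ⟨m, hm, rfl⟩⟩

theorem newt_one : Newt (1 : LP) = {0} := by
  simp [Newt, AddMonoidAlgebra.one_def, toR]

theorem newt_pow {F : LP} (hF : F ≠ 0) (n : ℕ) : Newt (F ^ n) = (n : ℝ) • Newt F := by
  induction n with
  | zero =>
    rw [pow_zero, newt_one, Nat.cast_zero, Set.zero_smul_set (newt_nonempty hF)]
    rfl
  | succ n ih =>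
    rw [pow_succ, newt_mul, ih, Nat.cast_succ,
      (convex_newt F).add_smul (Nat.cast_nonneg n) zero_le_one, one_smul]

theorem isMutationData_newt {v : NN} (hv : IsPrimitive v) {F : LP} (hF : F ≠ 0)
    (hFv : ∀ m ∈ F.coeff.support, pairZ v m = 0) : IsMutationData v (Newt F) := by
  obtain ⟨A, B, hAB⟩ := Int.isCoprime_iff_gcd_eq_one.mpr hv
  have hne : F.coeff.support.Nonempty := Finsupp.support_nonempty_iff.mpr (by simpa using hF)
  let τ : ℝ × ℝ → ℝ := fun x => A * x.2 - B * x.1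
  obtain ⟨a, ha, hamin⟩ := F.coeff.support.exists_min_image (τ ∘ toR) hne
  obtain ⟨b, hb, hbmax⟩ := F.coeff.support.exists_max_image (τ ∘ toR) hne
  refine ⟨hv, a, b, hFv a ha, hFv b hb, convexHull_eq_segment_of_param (τ := τ)
    (x₀ := (0 : ℝ) • ((A : ℝ), (B : ℝ))) (w := ((-v.2 : ℝ), (v.1 : ℝ))) ?_
    (Set.mem_image_of_mem _ ha) (Set.mem_image_of_mem _ hb) ?_⟩
  · rintro _ ⟨m, hm, rfl⟩
    exact eq_add_smul_of_pairR_eq hAB (t := 0) (by rw [pairR_toR, hFv m hm, Int.cast_zero])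
  · rintro _ ⟨m, hm, rfl⟩
    exact ⟨hamin m hm, hbmax m hm⟩

def heightPart (v : NN) (h : ℤ) : LP →+ LP where
  toFun p := .ofCoeff (p.coeff.filter (pairZ v · = h))
  map_zero' := congrArg AddMonoidAlgebra.ofCoeff (Finsupp.filter_zero _)
  map_add' _ _ := congrArg AddMonoidAlgebra.ofCoeff Finsupp.filter_add

section HeightPart

variable {v : NN} {h k : ℤ} {p q : LP}

theorem coeff_heightPart : (heightPart v h p).coeff = p.coeff.filter (pairZ v · = h) := rfl

theorem support_heightPart :
    (heightPart v h p).coeff.support = p.coeff.support.filter (pairZ v · = h) :=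
  Finsupp.support_filter _ _

theorem heightPart_eq_self (hp : ∀ m ∈ p.coeff.support, pairZ v m = h) : heightPart v h p = p :=
  congrArg AddMonoidAlgebra.ofCoeff <|
    (Finsupp.filter_eq_self_iff _ _).2 fun m hm => hp m (Finsupp.mem_support_iff.2 hm)

theorem heightPart_eq_zero (hp : ∀ m ∈ p.coeff.support, pairZ v m ≠ h) : heightPart v h p = 0 :=
  congrArg AddMonoidAlgebra.ofCoeff <|
    (Finsupp.filter_eq_zero_iff _ _).2 fun m hm => by_contra fun hne =>
      hp m (Finsupp.mem_support_iff.2 hne) hm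

theorem heightPart_neg (v : NN) (h : ℤ) (p : LP) : heightPart (-v) h p = heightPart v (-h) p := by
  have : ∀ m, pairZ (-v) m = h ↔ pairZ v m = -h := fun m => by
    simp only [pairZ, Prod.fst_neg, Prod.snd_neg, neg_mul]; omega
  apply AddMonoidAlgebra.coeff_injective
  simp only [coeff_heightPart, this]

theorem pairZ_add (v : NN) (a b : M) : pairZ v (a + b) = pairZ v a + pairZ v b := by
  simp only [pairZ, Prod.fst_add, Prod.snd_add]; ring

theorem pairZ_of_mem_support_single {m m' : M} {c : ℂ}
    (hm' : m' ∈ (AddMonoidAlgebra.single m c : LP).coeff.support) : pairZ v m' = pairZ v m := by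
  rw [Finset.mem_singleton.1 (Finsupp.support_single_subset hm')]

theorem pairZ_of_mem_support_mul (hp : ∀ m ∈ p.coeff.support, pairZ v m = h)
    (hq : ∀ m ∈ q.coeff.support, pairZ v m = k) :
    ∀ m ∈ (p * q).coeff.support, pairZ v m = h + k := by
  classical
  intro m hm
  obtain ⟨a, ha, b, hb, rfl⟩ := Finset.mem_add.1 (AddMonoidAlgebra.support_coeff_mul_subset p q hm)
  rw [pairZ_add, hp a ha, hq b hb]

theorem pairZ_of_mem_support_pow (hq : ∀ m ∈ q.coeff.support, pairZ v m = 0) (n : ℕ) :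
    ∀ m ∈ (q ^ n).coeff.support, pairZ v m = 0 := by
  induction n with
  | zero =>
    intro m hm
    rw [pow_zero, AddMonoidAlgebra.one_def] at hm
    rw [pairZ_of_mem_support_single hm]
    simp [pairZ]
  | succ n ih =>
    intro m hm
    rw [pow_succ] at hm
    simpa using pairZ_of_mem_support_mul ih hq m hm

theorem heightPart_mul_of_pairZ_eq_zero (hq : ∀ m ∈ q.coeff.support, pairZ v m = 0) (p : LP) :
    heightPart v h (p * q) = heightPart v h p * q := by
  induction p using AddMonoidAlgebra.induction_linear with
  | zero => simp
  | add p₁ p₂ h₁ h₂ => rw [add_mul, map_add, map_add, h₁, h₂, add_mul]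
  | single m c =>
    have hmq :=
      pairZ_of_mem_support_mul (p := .single m c) (fun _ => pairZ_of_mem_support_single) hq
    by_cases hm : pairZ v m = h
    · rw [heightPart_eq_self (fun m' hm' => by rw [hmq m' hm', add_zero, hm]),
        heightPart_eq_self (fun m' hm' => by rw [pairZ_of_mem_support_single hm', hm])]
    · rw [heightPart_eq_zero (fun m' hm' => by rwa [hmq m' hm', add_zero]),
        heightPart_eq_zero (fun m' hm' => by rwa [pairZ_of_mem_support_single hm']), zero_mul]

theorem newt_heightPart_subset_sliceAt (v : NN) (h : ℤ) (p : LP) :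
    Newt (heightPart v h p) ⊆ sliceAt (Newt p) v h := by
  refine convexHull_min ?_ (convex_sliceAt (convex_newt p) v h)
  rintro _ ⟨m, hm, rfl⟩
  rw [Finset.mem_coe, support_heightPart, Finset.mem_filter] at hm
  exact ⟨subset_convexHull ℝ _ ⟨m, hm.1, rfl⟩, by rw [pairR_toR, hm.2]⟩

theorem toR_mem_newt_heightPart {m : M} (hm : m ∈ p.coeff.support) :
    toR m ∈ Newt (heightPart v (pairZ v m) p) :=
  subset_convexHull ℝ _
    ⟨m, by rw [Finset.mem_coe, support_heightPart, Finset.mem_filter]; exact ⟨hm, rfl⟩, rfl⟩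

end HeightPart

theorem ι_injective : Function.Injective ι := IsFractionRing.injective LP K

namespace IsAlgMutation

variable {v : NN} {F f g : LP} {φ : K ≃+* K}

theorem map_single (hφ : IsAlgMutation v F φ) (m : M) (c : ℂ) :
    φ (ι (.single m c)) = ι (.single m c) * ι F ^ pairZ v m := by
  have : (AddMonoidAlgebra.single m c : LP) = .single 0 c * mono m := by
    rw [mono, AddMonoidAlgebra.single_mul_single, zero_add, mul_one]
  rw [this, map_mul, map_mul, hφ.2.2.2.1, hφ.2.2.2.2, mul_assoc]

theorem mul_pow_eq_sum (hφ : IsAlgMutation v F φ) (hg : φ (ι f) = ι g) {N : ℕ}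
    (hN : ∀ m ∈ f.coeff.support, 0 ≤ pairZ v m + N) :
    g * F ^ N = ∑ m ∈ f.coeff.support, .single m (f.coeff m) * F ^ (pairZ v m + N).toNat := by
  have hF : ι F ≠ 0 := (map_ne_zero_iff ι ι_injective).2 hφ.2.1
  apply ι_injective
  conv_lhs => rw [map_mul, ← hg, ← AddMonoidAlgebra.sum_coeff_single f]
  rw [Finsupp.sum, map_sum, map_sum, map_sum, Finset.sum_mul]
  refine Finset.sum_congr rfl fun m hm => ?_
  rw [map_single hφ, map_mul, map_pow, map_pow, mul_assoc, ← zpow_natCast, ← zpow_natCast,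
    ← zpow_add₀ hF, Int.toNat_of_nonneg (hN m hm)]

theorem heightPart_mul_pow (hφ : IsAlgMutation v F φ) (hg : φ (ι f) = ι g) (h : ℤ) :
    heightPart v h g * F ^ (-h).toNat = heightPart v h f * F ^ h.toNat := by
  -- `N` makes every exponent of `F` in `φ (ι f) * ι F ^ N` nonnegative, and `N ≥ |h|`
  set N := f.coeff.support.sup (fun m => (pairZ v m).natAbs) + h.natAbs
  have hN : ∀ m ∈ f.coeff.support, 0 ≤ pairZ v m + N := fun m hm => by
    have := Finset.le_sup (f := fun m => (pairZ v m).natAbs) hm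
    omega
  have hFN := pairZ_of_mem_support_pow hφ.2.2.1
  -- compare the height-`h` parts of `g * F ^ N = ∑ₘ cₘ xᵐ F ^ (⟨m, v⟩ + N)`
  have key : heightPart v h g * F ^ N = heightPart v h f * F ^ (h + N).toNat := by
    rw [← heightPart_mul_of_pairZ_eq_zero (hFN N), mul_pow_eq_sum hφ hg hN, map_sum]
    conv_rhs => rw [← AddMonoidAlgebra.sum_coeff_single f, Finsupp.sum, map_sum, Finset.sum_mul]
    refine Finset.sum_congr rfl fun m _ => ?_
    rw [heightPart_mul_of_pairZ_eq_zero (hFN _)]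
    by_cases hm : pairZ v m = h
    · rw [hm]
    · rw [heightPart_eq_zero fun m' hm' => by rwa [pairZ_of_mem_support_single hm'], zero_mul,
        zero_mul]
  obtain ⟨r, hr, hr'⟩ : ∃ r, N = (-h).toNat + r ∧ (h + N).toNat = h.toNat + r :=
    ⟨N - (-h).toNat, by omega, by omega⟩
  rw [hr', hr, pow_add, pow_add, ← mul_assoc, ← mul_assoc] at key
  exact mul_right_cancel₀ (pow_ne_zero r hφ.2.1) key

theorem newt_heightPart (hφ : IsAlgMutation v F φ) (hg : φ (ι f) = ι g) (h : ℤ) :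
    Newt (heightPart v h g) + ((-h).toNat : ℝ) • Newt F =
      Newt (heightPart v h f) + (h.toNat : ℝ) • Newt F := by
  rw [← newt_pow hφ.2.1, ← newt_pow hφ.2.1, ← newt_mul, ← newt_mul, hφ.heightPart_mul_pow hg]

end IsAlgMutation

theorem newt_subset_mutUpper_union_mutLower {v : NN} {F f g : LP} (hF : F ≠ 0)
    (hrel : ∀ h : ℤ, Newt (heightPart v h g) + ((-h).toNat : ℝ) • Newt F =
      Newt (heightPart v h f) + (h.toNat : ℝ) • Newt F) :
    Newt f ⊆ mutUpper (pairLin v) (Newt F) (Newt g) ∪ mutLower (pairLin v) (Newt F) (Newt g) := by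
  refine convexHull_min ?_
    (convex_mutUpper_union_mutLower (convex_newt g) (convex_newt F) (newt_nonempty hF))
  rintro _ ⟨m, hm, rfl⟩
  have hmf := toR_mem_newt_heightPart (v := v) hm
  have hsub := newt_heightPart_subset_sliceAt v (pairZ v m) g
  have hℓ : pairLin v (toR m) = pairZ v m := pairR_toR v m
  have hzero : ∀ X : Set (ℝ × ℝ), X + ((0 : ℕ) : ℝ) • Newt F = X := fun X => by
    rw [Nat.cast_zero, Set.zero_smul_set (newt_nonempty hF), add_zero]
  have hrel := hrel (pairZ v m)
  rcases le_total 0 (pairZ v m) with h0 | h0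
  · rw [Int.toNat_of_nonpos (neg_nonpos.2 h0), hzero, ← Int.cast_natCast,
      Int.toNat_of_nonneg h0, ← hℓ] at hrel
    refine .inl ⟨by rw [hℓ]; exact_mod_cast h0, fun ψ hψ => (hsub ?_).1⟩
    exact hrel ▸ Set.add_mem_add hmf (Set.smul_mem_smul_set hψ)
  · rw [Int.toNat_of_nonpos h0, hzero, ← Int.cast_natCast, Int.toNat_of_nonneg (neg_nonneg.2 h0),
      Int.cast_neg, ← hℓ] at hrel
    refine .inr ⟨by rw [hℓ]; exact_mod_cast h0, ?_⟩
    rw [← hrel] at hmf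
    refine Set.add_subset_add (fun y hy => ?_) subset_rfl hmf
    exact ⟨(hsub hy).1, hℓ ▸ (hsub hy).2⟩

section MutationOfPolygons

variable {P Q Fh : Set (ℝ × ℝ)} {v : NN}

theorem sliceAt_eq_add_smul (hFh : Fh.Nonempty) (hFv : ∀ ψ ∈ Fh, pairLin v ψ = 0)
    (hP : P ⊆ mutUpper (pairLin v) Fh Q ∪ mutLower (pairLin v) Fh Q)
    (hQ : Q ⊆ mutUpper (-pairLin v) Fh P ∪ mutLower (-pairLin v) Fh P) {h : ℤ} (hh : h ≤ 0) :
    sliceAt P v h = sliceAt Q v h + ((-h : ℤ) : ℝ) • Fh := by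
  refine subset_antisymm ?_ ?_
  · rintro x ⟨hxP, hxh⟩
    have hx := (mem_mutLower_of_mem_union hFh (hP hxP) (by simpa [hxh] using hh)).2
    simpa [sliceAt, hxh] using hx
  · rintro _ ⟨y, ⟨hyQ, hyh⟩, _, ⟨ψ, hψ, rfl⟩, rfl⟩
    have hy := mem_mutUpper_of_mem_union (hQ hyQ) (by simpa [hyh] using hh)
    refine ⟨by simpa [hyh] using hy.2 ψ hψ, ?_⟩
    change pairLin v (y + _) = _
    rw [map_add, map_smul, hFv ψ hψ, smul_zero, add_zero]
    exact hyh

theorem eq_convexHull_mutation (hFh : Fh.Nonempty) {S : Set M}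
    (hQS : Q = convexHull ℝ (toR '' S))
    (hP : P ⊆ mutUpper (pairLin v) Fh Q ∪ mutLower (pairLin v) Fh Q)
    (hQ : Q ⊆ mutUpper (-pairLin v) Fh P ∪ mutLower (-pairLin v) Fh P) :
    Q = convexHull ℝ ((⋃ h : ℤ, ⋃ _ : h < 0, sliceAt Q v h) ∪
      (⋃ h : ℤ, ⋃ _ : 0 ≤ h, (sliceAt P v h + (h : ℝ) • Fh))) := by
  refine (hQS.le.trans (convexHull_mono ?_)).antisymm
    (convexHull_min (Set.union_subset ?_ ?_) (hQS ▸ convex_convexHull ℝ _))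
  · rintro _ ⟨m, hm, rfl⟩
    have hmQ : toR m ∈ Q := hQS ▸ subset_convexHull ℝ _ ⟨m, hm, rfl⟩
    rcases lt_or_ge (pairZ v m) 0 with h0 | h0
    · exact .inl (Set.mem_biUnion h0 ⟨hmQ, pairR_toR v m⟩)
    · refine .inr (Set.mem_biUnion h0 ?_)
      have hm := (mem_mutLower_of_mem_union hFh (hQ hmQ) (by simpa [pairR_toR] using h0)).2
      simpa [sliceAt, pairR_toR] using hm
  · exact Set.iUnion₂_subset fun h _ => Set.sep_subset _ _
  · refine Set.iUnion₂_subset fun h hh => ?_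
    rintro _ ⟨x, ⟨hxP, hxh⟩, _, ⟨ψ, hψ, rfl⟩, rfl⟩
    have hx := mem_mutUpper_of_mem_union (hP hxP) (by simpa [hxh] using hh)
    simpa [hxh] using hx.2 ψ hψ

end MutationOfPolygons

theorem newton_polygon_mutates_general (f g F : LP) (v : NN) (φ : K ≃+* K)
    (hφ : IsAlgMutation v F φ)
    (hg : φ (ι f) = ι g) :
    IsMutationOf v (Newt F) (Newt f) (Newt g) := by
  have hF : F ≠ 0 := hφ.2.1
  have hNFv : ∀ ψ ∈ Newt F, pairLin v ψ = 0 := fun ψ hψ => by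
    simpa using (newt_heightPart_subset_sliceAt v 0 F (by rwa [heightPart_eq_self hφ.2.2.1])).2
  have hf := newt_subset_mutUpper_union_mutLower hF (hφ.newt_heightPart hg)
  have hg' := newt_subset_mutUpper_union_mutLower (v := -v) (f := g) (g := f) hF fun h => by
    simpa only [heightPart_neg, neg_neg] using (hφ.newt_heightPart hg (-h)).symm
  rw [pairLin_neg] at hg'
  exact ⟨isMutationData_newt hφ.1 hF hφ.2.2.1, fun h => sliceAt (Newt g) v h,
    fun h hh => ⟨isPolytope_sliceAt (isCompact_newt g) (convex_newt g) hφ.1 h,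
      sliceAt_eq_add_smul (newt_nonempty hF) hNFv hf hg' hh.le⟩,
    eq_convexHull_mutation (newt_nonempty hF) rfl hf hg'⟩

/-- If `f` is a Laurent polynomial whose Newton polygon is a Fano polygon and
`g = φ*f` is the pullback of `f` under an algebraic mutation `φ = φ_{v,F}` (so `g` is again a
Laurent polynomial), then `Newt f` is mutable with respect to `(v, Newt F)` and
`Newt g = mut_{v, Newt F}(Newt f)`. -/
theorem newton_polygon_mutates (f g F : LP) (v : NN) (φ : K ≃+* K)
    (hFano : IsFanoPolygon (Newt f))
    (hφ : IsAlgMutation v F φ)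
    (hg : φ (ι f) = ι g) :
    IsMutationOf v (Newt F) (Newt f) (Newt g) :=
  newton_polygon_mutates_general f g F v φ hφ hg
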